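/- If L is a very full lamination system on S^1, then the set E(L) of all endpoints of leaves of L is dense in S^1. -/

import Mathlib

open Set Topology

noncomputable section

/-- Stereographic projection from `1 ∈ S¹`. -/
def sproj (z : Circle) : ℝ := (z : ℂ).im / ((z : ℂ).re - 1)

/-- `(a,b,c)` is a positively oriented triple on `S¹`. -/
def posOri (a b c : Circle) : Prop :=
  a ≠ b ∧ b ≠ c ∧ c ≠ a ∧ sproj (a⁻¹ * b) < sproj (a⁻¹ * c)

/-- The nondegenerate open interval `(u,v)` on `S¹`. -/
def oInt (u v : Circle) : Set Circle := {p | posOri u p v}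

/-- `I` is a nondegenerate open interval on `S¹`. -/
def IsND (I : Set Circle) : Prop := ∃ u v : Circle, u ≠ v ∧ I = oInt u v

/-- The dual interval `I* = (v,u)` of `I = (u,v)`, i.e. the interior of the complement. -/
def dual (I : Set Circle) : Set Circle := interior Iᶜ

/-- The leaf `{I, I*}` lies on `J`. -/
def LiesOn (I J : Set Circle) : Prop := I ⊆ J ∨ dual I ⊆ J

/-- A lamination system on `S¹`. -/
structure LamSys (L : Set (Set Circle)) : Prop where
  nonempty : L.Nonempty
  nd : ∀ I ∈ L, IsND I
  dualMem : ∀ I ∈ L, dual I ∈ L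
  unlinked : ∀ I ∈ L, ∀ J ∈ L, LiesOn I J ∨ LiesOn I (dual J)
  chainUnion : ∀ f : ℕ → Set Circle, (∀ n, f n ∈ L) → (∀ n, f n ⊆ f (n + 1)) →
    IsND (⋃ n, f n) → (⋃ n, f n) ∈ L

/-- The leaf associated to an interval. -/
def leafOf (I : Set Circle) : Set (Set Circle) := {I, dual I}

/-- `liminf` of a sequence of sets. -/
def sLiminf (f : ℕ → Set Circle) : Set Circle := ⋃ k, ⋂ n, ⋂ (_ : k ≤ n), f n

/-- `limsup` of a sequence of sets. -/
def sLimsup (f : ℕ → Set Circle) : Set Circle := ⋂ k, ⋃ n, ⋃ (_ : k ≤ n), f n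

/-- The sequence of intervals converges to `J`. -/
def ConvTo (f : ℕ → Set Circle) (J : Set Circle) : Prop :=
  J ⊆ sLiminf f ∧ sLiminf f ⊆ sLimsup f ∧ sLimsup f ⊆ closure J

/-- A gap of a lamination system. -/
def IsGap (L G : Set (Set Circle)) : Prop :=
  G ⊆ L ∧ (∀ I ∈ G, ∀ J ∈ G, I ≠ J → I ∩ J = ∅) ∧ ∀ I ∈ L, ∃ J ∈ G, LiesOn I J

/-- A gap which is a leaf. -/
def IsLeafGap (G : Set (Set Circle)) : Prop := ∃ I, G = leafOf I

/-- The vertex (endpoint) set of a gap. -/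
def vset (G : Set (Set Circle)) : Set Circle := (⋃₀ G)ᶜ

/-- A very full lamination system: every gap is an ideal polygon (finite vertex set). -/
def VeryFull (L : Set (Set Circle)) : Prop := ∀ G, IsGap L G → (vset G).Finite

/-- The set of endpoints of leaves of `L`. -/
def ELset (L : Set (Set Circle)) : Set Circle := ⋃ I ∈ L, frontier I

/-- A rainbow at `p`. -/
def Rainbow (L : Set (Set Circle)) (p : Circle) (f : ℕ → Set Circle) : Prop :=
  (∀ n, f n ∈ L) ∧ (∀ n, f (n + 1) ⊆ f n) ∧ (⋂ n, f n) = {p}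

/-- An `I`-side sequence of leaves. -/
def SideSeq (L : Set (Set Circle)) (I : Set Circle) (f : ℕ → Set Circle) : Prop :=
  (∀ n, f n ∈ L) ∧ (∀ n, I ∉ leafOf (f n)) ∧ (∀ n, LiesOn (f n) I) ∧ ConvTo f I

/-- `I` is isolated in `L`. -/
def IsolatedInt (L : Set (Set Circle)) (I : Set Circle) : Prop := ∀ f, ¬ SideSeq L I f

/-- `C_p^I`. -/
def Cset (L : Set (Set Circle)) (p : Circle) (I : Set Circle) : Set (Set Circle) :=
  {J ∈ L | p ∈ J ∧ J ⊆ I}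

/-- The group of self-homeomorphisms of the circle (composition as multiplication). -/
instance : Group (Circle ≃ₜ Circle) where
  mul g h := h.trans g
  one := Homeomorph.refl _
  inv := Homeomorph.symm
  mul_assoc _ _ _ := Homeomorph.ext fun _ => rfl
  one_mul _ := Homeomorph.ext fun _ => rfl
  mul_one _ := Homeomorph.ext fun _ => rfl
  inv_mul_cancel g := Homeomorph.ext fun x => g.symm_apply_apply x

/-- An orientation-preserving homeomorphism of the circle. -/
def OrientPres (g : Circle ≃ₜ Circle) : Prop :=
  ∀ a b c, posOri a b c → posOri (g a) (g b) (g c)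

/-- `L` is invariant under a subgroup `G` of homeomorphisms. -/
def GInv (G : Subgroup (Circle ≃ₜ Circle)) (L : Set (Set Circle)) : Prop :=
  ∀ g ∈ G, ∀ I ∈ L, (⇑g) '' I ∈ L

/-- The image of a gap under a homeomorphism. -/
def gapIm (g : Circle ≃ₜ Circle) (P : Set (Set Circle)) : Set (Set Circle) :=
  (fun I => (⇑g) '' I) '' P

/-- `v_G(P)`, the union of the vertex sets of the `G`-orbit of the gap `P`. -/
def vOrb (G : Subgroup (Circle ≃ₜ Circle)) (P : Set (Set Circle)) : Set Circle :=
  ⋃ g ∈ G, vset (gapIm g P)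

/-- A loose lamination system: distinct non-leaf gaps have disjoint vertex sets. -/
def Loose (L : Set (Set Circle)) : Prop :=
  ∀ P Q, IsGap L P → IsGap L Q → ¬ IsLeafGap P → ¬ IsLeafGap Q → P ≠ Q →
    vset P ∩ vset Q = ∅

/-- A pseudo-fibered triple `(L₁, L₂, G)`. -/
structure PFib (L₁ L₂ : Set (Set Circle)) (G : Subgroup (Circle ≃ₜ Circle)) : Prop where
  orient : ∀ g ∈ G, OrientPres g
  fg : G.FG
  lam₁ : LamSys L₁
  lam₂ : LamSys L₂
  inv₁ : GInv G L₁
  inv₂ : GInv G L₂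
  veryFull₁ : VeryFull L₁
  veryFull₂ : VeryFull L₂
  loose₁ : Loose L₁
  loose₂ : Loose L₂
  disjEnds : ELset L₁ ∩ ELset L₂ = ∅

end

/-! If an open arc `U` contained no endpoint, `U` would lie on one side of every leaf. By Zorn's
lemma every leaf missing `U` lies in a maximal one (a union of a chain of leaves missing `U` is a
leaf, by the axiom on increasing unions), and unlinkedness makes distinct maximal leaves missing
`U` disjoint. They therefore form a gap whose vertex set contains the infinite arc `U`, which
very fullness forbids. Intervals are handled in the charts `t ↦ q (t - i)/(t + i)` of `S¹ \ {q}`,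
in which they become real intervals. -/

noncomputable section

/-- The Cayley transform `t ↦ (t - i) / (t + i)` in coordinates; it inverts `sproj`. -/
def cayley (t : ℝ) : Circle :=
  ⟨⟨(t ^ 2 - 1) / (t ^ 2 + 1), -(2 * t) / (t ^ 2 + 1)⟩, by
    have : (t ^ 2 + 1 : ℝ) ≠ 0 := by positivity
    simp only [Submonoid.unitSphere, Submonoid.mem_mk, Subsemigroup.mem_mk,
      mem_sphere_zero_iff_norm, Complex.norm_def, Complex.normSq_mk]
    rw [← Real.sqrt_one]
    congr 1
    field_simp
    ring⟩

lemma cayley_re (t : ℝ) : (cayley t : ℂ).re = (t ^ 2 - 1) / (t ^ 2 + 1) := rfl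

lemma cayley_im (t : ℝ) : (cayley t : ℂ).im = -(2 * t) / (t ^ 2 + 1) := rfl

lemma Circle.re_sq_add_im_sq (z : Circle) : (z : ℂ).re ^ 2 + (z : ℂ).im ^ 2 = 1 := by
  have h : Complex.normSq (z : ℂ) = 1 := by simp
  rw [Complex.normSq_apply] at h
  linear_combination h

lemma Circle.eq_one_of_re_eq_one {z : Circle} (h : (z : ℂ).re = 1) : z = 1 := by
  have him : (z : ℂ).im = 0 := by nlinarith [z.re_sq_add_im_sq]
  exact Circle.ext (Complex.ext (by simp [h]) (by simp [him]))

lemma cayley_ne_one (t : ℝ) : cayley t ≠ 1 := by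
  intro h
  have hre : (cayley t : ℂ).re = 1 := by simp [h]
  rw [cayley_re, div_eq_one_iff_eq (by positivity)] at hre
  linarith

lemma sproj_cayley (t : ℝ) : sproj (cayley t) = t := by
  have hd : (t ^ 2 + 1 : ℝ) ≠ 0 := by positivity
  have hden : (t ^ 2 - 1) / (t ^ 2 + 1) - 1 ≠ 0 := by
    rw [div_sub_one hd]; exact div_ne_zero (by ring_nf; norm_num) hd
  rw [sproj, cayley_re, cayley_im, div_eq_iff hden]
  field_simp
  ring

lemma cayley_sproj {z : Circle} (hz : z ≠ 1) : cayley (sproj z) = z := by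
  have hxy := z.re_sq_add_im_sq
  have hx : (z : ℂ).re - 1 ≠ 0 := sub_ne_zero.mpr fun h => hz (Circle.eq_one_of_re_eq_one h)
  have key : (sproj z) ^ 2 + 1 = -2 / ((z : ℂ).re - 1) := by
    rw [sproj]; field_simp; linear_combination hxy
  apply Circle.ext
  apply Complex.ext
  · rw [cayley_re, key, sproj]; field_simp; linear_combination -hxy
  · rw [cayley_im, key, sproj]; field_simp

lemma sproj_inv (z : Circle) : sproj z⁻¹ = -sproj z := by
  have h : Complex.normSq (z : ℂ) = 1 := by simp
  simp [sproj, Circle.coe_inv, Complex.inv_re, Complex.inv_im, h, neg_div]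

lemma sproj_cayley_mul_cayley {a b : ℝ} (h : a + b ≠ 0) :
    sproj (cayley a * cayley b) = (a * b - 1) / (a + b) := by
  have ha : (a ^ 2 + 1 : ℝ) ≠ 0 := by positivity
  have hb : (b ^ 2 + 1 : ℝ) ≠ 0 := by positivity
  have hre : ((cayley a * cayley b : Circle) : ℂ).re - 1
      = -(2 * (a + b) ^ 2) / ((a ^ 2 + 1) * (b ^ 2 + 1)) := by
    rw [Circle.coe_mul, Complex.mul_re, cayley_re, cayley_im, cayley_re, cayley_im]
    field_simp; ring
  have him : ((cayley a * cayley b : Circle) : ℂ).im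
      = -(2 * (a + b) * (a * b - 1)) / ((a ^ 2 + 1) * (b ^ 2 + 1)) := by
    rw [Circle.coe_mul, Complex.mul_im, cayley_re, cayley_im, cayley_re, cayley_im]
    field_simp; ring
  rw [sproj, hre, him]
  field_simp

lemma continuous_cayley : Continuous cayley := by
  refine Continuous.subtype_mk ?_ _
  have hre : Continuous fun t : ℝ => (t ^ 2 - 1) / (t ^ 2 + 1) :=
    (by fun_prop : Continuous fun t : ℝ => t ^ 2 - 1).div (by fun_prop) fun t => by positivity
  have him : Continuous fun t : ℝ => -(2 * t) / (t ^ 2 + 1) :=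
    (by fun_prop : Continuous fun t : ℝ => -(2 * t)).div (by fun_prop) fun t => by positivity
  exact Complex.equivRealProdCLM.symm.continuous.comp (hre.prodMk him)

def circleParam (q : Circle) (t : ℝ) : Circle := q * cayley t

def circleCoord (q p : Circle) : ℝ := sproj (q⁻¹ * p)

lemma circleParam_ne (q : Circle) (t : ℝ) : circleParam q t ≠ q := by
  simpa [circleParam] using cayley_ne_one t

lemma circleCoord_circleParam (q : Circle) (t : ℝ) : circleCoord q (circleParam q t) = t := by
  rw [circleCoord, circleParam, inv_mul_cancel_left, sproj_cayley]

lemma circleParam_circleCoord {q p : Circle} (h : p ≠ q) :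
    circleParam q (circleCoord q p) = p := by
  rw [circleParam, circleCoord, cayley_sproj, mul_inv_cancel_left]
  exact fun h' => h (inv_mul_eq_one.mp h').symm

lemma circleParam_injective (q : Circle) : Function.Injective (circleParam q) :=
  Function.LeftInverse.injective (circleCoord_circleParam q)

lemma continuous_circleParam (q : Circle) : Continuous (circleParam q) :=
  continuous_const.mul continuous_cayley

lemma continuousAt_circleCoord {q p : Circle} (h : p ≠ q) : ContinuousAt (circleCoord q) p := by
  have hcont : Continuous fun x : Circle => ((q⁻¹ * x : Circle) : ℂ) := by fun_prop
  have hden : ((q⁻¹ * p : Circle) : ℂ).re - 1 ≠ 0 := fun h' =>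
    h (inv_mul_eq_one.mp (Circle.eq_one_of_re_eq_one (by linarith))).symm
  exact ((Complex.continuous_im.comp hcont).continuousAt).div
    ((Complex.continuous_re.comp hcont).continuousAt.sub continuousAt_const) hden

lemma circleCoord_swap (u v : Circle) : circleCoord v u = -circleCoord u v := by
  rw [circleCoord, circleCoord, ← sproj_inv, mul_inv_rev, inv_inv]

/-- The change of charts is the Möbius map `d ↦ (c d - 1) / (c + d)`, written to show its
monotonicity on either side of the pole `-c`. -/
lemma circleCoord_circleParam_of_ne {u q : Circle} (hq : q ≠ u) {d : ℝ}
    (hd : d ≠ -circleCoord u q) :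
    circleCoord u (circleParam q d)
      = circleCoord u q - (circleCoord u q ^ 2 + 1) / (circleCoord u q + d) := by
  have hsum : circleCoord u q + d ≠ 0 := fun h => hd (by linarith)
  have hc : u⁻¹ * q = cayley (circleCoord u q) := by
    rw [circleCoord, cayley_sproj fun h => hq (inv_mul_eq_one.mp h).symm]
  rw [circleCoord, circleParam, ← mul_assoc, hc, sproj_cayley_mul_cayley hsum]
  field_simp
  ring

lemma left_notMem_oInt (u v : Circle) : u ∉ oInt u v := fun h => h.1 rfl

lemma right_notMem_oInt (u v : Circle) : v ∉ oInt u v := fun h => h.2.1 rfl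

lemma mem_oInt_iff {u v : Circle} (huv : u ≠ v) {p : Circle} :
    p ∈ oInt u v ↔ p ≠ u ∧ circleCoord u p < circleCoord u v :=
  ⟨fun ⟨hup, _, _, hlt⟩ => ⟨hup.symm, hlt⟩,
    fun ⟨hpu, hlt⟩ => ⟨hpu.symm, by rintro rfl; exact hlt.false, huv.symm, hlt⟩⟩

lemma oInt_eq_image_Iio {u v : Circle} (huv : u ≠ v) :
    oInt u v = circleParam u '' Iio (circleCoord u v) := by
  ext p
  rcases eq_or_ne p u with rfl | hpu
  · simpa [left_notMem_oInt] using fun t _ => circleParam_ne p t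
  · rw [mem_oInt_iff huv, ← circleParam_circleCoord hpu, (circleParam_injective u).mem_set_image,
      circleCoord_circleParam]
    exact and_iff_right (circleParam_ne u _)

lemma circleParam_mem_oInt_iff {u v : Circle} (huv : u ≠ v) (d : ℝ) :
    circleParam v d ∈ oInt u v ↔ circleCoord v u < d := by
  rw [circleCoord_swap]
  rcases eq_or_ne d (-circleCoord u v) with rfl | hd
  · rw [← circleCoord_swap, circleParam_circleCoord huv]
    simpa using left_notMem_oInt u v
  · have hpu : circleParam v d ≠ u := by
      rw [← circleParam_circleCoord huv, circleCoord_swap]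
      exact (circleParam_injective v).ne hd
    rw [mem_oInt_iff huv, circleCoord_circleParam_of_ne huv.symm hd, and_iff_right hpu,
      sub_lt_self_iff, div_pos_iff_of_pos_left (by positivity), neg_lt_iff_pos_add']

lemma oInt_eq_image_Ioi {u v : Circle} (huv : u ≠ v) :
    oInt u v = circleParam v '' Ioi (circleCoord v u) := by
  ext p
  rcases eq_or_ne p v with rfl | hpv
  · simpa [right_notMem_oInt] using fun t _ => circleParam_ne p t
  · rw [← circleParam_circleCoord hpv, circleParam_mem_oInt_iff huv,
      (circleParam_injective v).mem_set_image, mem_Ioi]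

lemma div_sub_lt_div_sub_iff {k a b t : ℝ} (hk : 0 < k) (hab : a < b) (hta : t ≠ a) :
    k / (b - a) < k / (t - a) ↔ a < t ∧ t < b := by
  rcases hta.lt_or_gt with hta | hta
  · have : k / (t - a) < 0 := div_neg_of_pos_of_neg hk (by linarith)
    have : 0 < k / (b - a) := div_pos hk (by linarith)
    constructor <;> intros <;> linarith
  · rw [div_lt_div_iff_of_pos_left hk (by linarith) (by linarith)]
    constructor
    · intro h; exact ⟨hta, by linarith⟩
    · intro h; linarith [h.2]

lemma oInt_circleParam (q : Circle) {a b : ℝ} (hab : a < b) :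
    oInt (circleParam q a) (circleParam q b) = circleParam q '' Ioo a b := by
  set u := circleParam q a
  have huv : u ≠ circleParam q b := (circleParam_injective q).ne hab.ne
  have hqu : q ≠ u := (circleParam_ne q a).symm
  have hcq : circleCoord u q = -a := by
    rw [circleCoord_swap, circleCoord_circleParam]
  have hcoord : ∀ t ≠ a, circleCoord u (circleParam q t) = -a - (a ^ 2 + 1) / (t - a) := by
    intro t ht
    rw [circleCoord_circleParam_of_ne hqu (by rwa [hcq, neg_neg]), hcq]
    ring_nf
  have hk : (0 : ℝ) < a ^ 2 + 1 := by positivity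
  ext p
  rcases eq_or_ne p q with rfl | hpq
  · have : 0 < (a ^ 2 + 1) / (b - a) := div_pos hk (by linarith)
    simp only [mem_oInt_iff huv, hcq, hcoord b hab.ne', mem_image, circleParam_ne, and_false,
      exists_false, iff_false, not_and, not_lt]
    intro; linarith
  · rw [← circleParam_circleCoord hpq, (circleParam_injective q).mem_set_image]
    set t := circleCoord q p
    rcases eq_or_ne t a with hta | hta
    · simp [hta, u, left_notMem_oInt]
    · rw [mem_oInt_iff huv, hcoord t hta, hcoord b hab.ne', and_iff_right
        ((circleParam_injective q).ne hta), sub_lt_sub_iff_left,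
        div_sub_lt_div_sub_iff hk hab hta, mem_Ioo]

lemma disjoint_oInt_swap {u v : Circle} (huv : u ≠ v) : Disjoint (oInt u v) (oInt v u) := by
  rw [oInt_eq_image_Ioi huv, oInt_eq_image_Iio huv.symm,
    disjoint_image_iff (circleParam_injective v)]
  exact Ioi_disjoint_Iio_same

lemma mem_oInt_or_mem_oInt_swap {u v p : Circle} (huv : u ≠ v) (hpu : p ≠ u) (hpv : p ≠ v) :
    p ∈ oInt u v ∨ p ∈ oInt v u := by
  rw [oInt_eq_image_Ioi huv, oInt_eq_image_Iio huv.symm, ← circleParam_circleCoord hpv,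
    (circleParam_injective v).mem_set_image, (circleParam_injective v).mem_set_image]
  have hne : circleCoord v p ≠ circleCoord v u := fun h => hpu <| by
    rw [← circleParam_circleCoord hpv, h, circleParam_circleCoord huv]
  exact hne.lt_or_gt.symm

lemma isOpen_oInt {u v : Circle} (huv : u ≠ v) : IsOpen (oInt u v) := by
  refine isOpen_iff_mem_nhds.mpr fun p hp => ?_
  obtain ⟨hpu, hlt⟩ := (mem_oInt_iff huv).mp hp
  filter_upwards [isOpen_ne.mem_nhds hpu,
    (continuousAt_circleCoord hpu).preimage_mem_nhds (Iio_mem_nhds hlt)] with x hxu hx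
  exact (mem_oInt_iff huv).mpr ⟨hxu, hx⟩

lemma isPreconnected_oInt {u v : Circle} (huv : u ≠ v) : IsPreconnected (oInt u v) := by
  rw [oInt_eq_image_Iio huv]
  exact isPreconnected_Iio.image _ (continuous_circleParam u).continuousOn

lemma oInt_infinite {u v : Circle} (huv : u ≠ v) : (oInt u v).Infinite := by
  rw [oInt_eq_image_Iio huv]
  exact (Iio_infinite _).image (circleParam_injective u).injOn

lemma left_mem_closure_oInt {u v : Circle} (huv : u ≠ v) : u ∈ closure (oInt u v) := by
  rw [oInt_eq_image_Ioi huv]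
  refine image_closure_subset_closure_image (continuous_circleParam v) ⟨_, ?_,
    circleParam_circleCoord huv⟩
  rw [closure_Ioi]
  exact self_mem_Ici

lemma right_mem_closure_oInt {u v : Circle} (huv : u ≠ v) : v ∈ closure (oInt u v) := by
  rw [oInt_eq_image_Iio huv]
  refine image_closure_subset_closure_image (continuous_circleParam u) ⟨_, ?_,
    circleParam_circleCoord huv.symm⟩
  rw [closure_Iio]
  exact self_mem_Iic

lemma dual_oInt {u v : Circle} (huv : u ≠ v) : dual (oInt u v) = oInt v u := by
  refine subset_antisymm (fun p hp => ?_) (interior_maximal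
    (subset_compl_iff_disjoint_right.mpr (disjoint_oInt_swap huv.symm)) (isOpen_oInt huv.symm))
  rw [dual, interior_compl] at hp
  have hpu : p ≠ u := by rintro rfl; exact hp (left_mem_closure_oInt huv)
  have hpv : p ≠ v := by rintro rfl; exact hp (right_mem_closure_oInt huv)
  exact (mem_oInt_or_mem_oInt_swap huv hpu hpv).resolve_left fun h => hp (subset_closure h)

lemma IsND.isOpen {I : Set Circle} (hI : IsND I) : IsOpen I := by
  obtain ⟨u, v, huv, rfl⟩ := hI
  exact isOpen_oInt huv

lemma IsND.isPreconnected {I : Set Circle} (hI : IsND I) : IsPreconnected I := by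
  obtain ⟨u, v, huv, rfl⟩ := hI
  exact isPreconnected_oInt huv

lemma IsND.infinite {I : Set Circle} (hI : IsND I) : I.Infinite := by
  obtain ⟨u, v, huv, rfl⟩ := hI
  exact oInt_infinite huv

lemma IsND.dual_dual {I : Set Circle} (hI : IsND I) : dual (dual I) = I := by
  obtain ⟨u, v, huv, rfl⟩ := hI
  rw [dual_oInt huv, dual_oInt huv.symm]

lemma IsOpen.eq_Ioo_csInf_csSup {α : Type*} [ConditionallyCompleteLinearOrder α]
    [TopologicalSpace α] [OrderTopology α] [DenselyOrdered α] [NoMinOrder α] [NoMaxOrder α]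
    {s : Set α} (hso : IsOpen s) (hsc : IsPreconnected s) (hne : s.Nonempty) (hb : BddBelow s)
    (ha : BddAbove s) : s = Ioo (sInf s) (sSup s) := by
  have hinf : sInf s ∉ s := fun h => by
    obtain ⟨x, hx, hxs⟩ := Filter.Eventually.exists_lt (hso.mem_nhds h)
    exact (csInf_le hb hxs).not_gt hx
  have hsup : sSup s ∉ s := fun h => by
    obtain ⟨x, hx, hxs⟩ := Filter.Eventually.exists_gt (hso.mem_nhds h)
    exact (le_csSup ha hxs).not_gt hx
  refine subset_antisymm (fun x hx => ⟨?_, ?_⟩)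
    (IsConnected.Ioo_csInf_csSup_subset ⟨hne, hsc⟩ hb ha)
  · exact (csInf_le hb hx).lt_of_ne fun h => hinf (h ▸ hx)
  · exact (le_csSup ha hx).lt_of_ne fun h => hsup (h.symm ▸ hx)

/-- In the chart centred at `q`, the set `W` is a bounded open interval of `ℝ`. -/
lemma isND_of_isOpen_of_isPreconnected {W : Set Circle} (hWo : IsOpen W)
    (hWc : IsPreconnected W) (hWne : W.Nonempty) {q : Circle} (hq : q ∉ closure W) : IsND W := by
  have hcl : ∀ p ∈ closure W, p ≠ q := fun p hp h => hq (h ▸ hp)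
  set W' := circleCoord q '' W
  have hW : circleParam q '' W' = W := by
    rw [image_image]
    exact EqOn.image_eq_self fun p hp => circleParam_circleCoord (hcl p (subset_closure hp))
  have hcont : ContinuousOn (circleCoord q) (closure W) :=
    fun p hp => (continuousAt_circleCoord (hcl p hp)).continuousWithinAt
  have hW'o : IsOpen W' := by
    rw [← (circleParam_injective q).preimage_image W', hW]
    exact hWo.preimage (continuous_circleParam q)
  have hW'c : IsPreconnected W' := hWc.image _ (hcont.mono subset_closure)
  have hbdd : Bornology.IsBounded W' :=
    (isClosed_closure.isCompact.image_of_continuousOn hcont).isBounded.subset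
      (image_mono subset_closure)
  have hIoo := hW'o.eq_Ioo_csInf_csSup hW'c (hWne.image _) hbdd.bddBelow hbdd.bddAbove
  have hab : sInf W' < sSup W' := by
    obtain ⟨t, ht⟩ : W'.Nonempty := hWne.image _
    rw [hIoo] at ht
    exact ht.1.trans ht.2
  refine ⟨_, _, (circleParam_injective q).ne hab.ne, ?_⟩
  rw [oInt_circleParam q hab, ← hIoo, hW]

lemma exists_oInt_subset_of_isOpen {U : Set Circle} (hU : IsOpen U) (hne : U.Nonempty) :
    ∃ u v, u ≠ v ∧ oInt u v ⊆ U := by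
  obtain ⟨x, hx⟩ := hne
  set q := x * (cayley 0)⁻¹
  have hx0 : circleParam q 0 = x := inv_mul_cancel_right x (cayley 0)
  have hpre : circleParam q ⁻¹' U ∈ 𝓝 0 :=
    (hU.preimage (continuous_circleParam q)).mem_nhds (by rwa [mem_preimage, hx0])
  obtain ⟨a, b, hab0, hsub⟩ := mem_nhds_iff_exists_Ioo_subset.mp hpre
  have hab : a < b := hab0.1.trans hab0.2
  refine ⟨_, _, (circleParam_injective q).ne hab.ne, ?_⟩
  rw [oInt_circleParam q hab]
  exact image_subset_iff.mpr hsub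

lemma disjoint_dual (I : Set Circle) : Disjoint I (dual I) :=
  disjoint_compl_right.mono_right interior_subset

lemma dual_subset_dual {I J : Set Circle} (h : I ⊆ J) : dual J ⊆ dual I :=
  interior_mono (compl_subset_compl.mpr h)

lemma IsPreconnected.subset_or_subset_dual {U I : Set Circle} (hU : IsPreconnected U)
    (hI : IsOpen I) (hfr : Disjoint U (frontier I)) : U ⊆ I ∨ U ⊆ dual I := by
  refine hU.subset_or_subset hI isOpen_interior (disjoint_dual I) fun p hp => ?_
  by_cases hpI : p ∈ I
  · exact Or.inl hpI
  · refine Or.inr ?_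
    rw [dual, interior_compl]
    exact fun hcl => disjoint_left.mp hfr hp ⟨hcl, by rwa [hI.interior_eq]⟩

/-- Only countably many members of `c` are needed to exhaust its union, and finite subchains have
a largest member, so the union is that of an increasing sequence of leaves. -/
lemma LamSys.sUnion_mem {L : Set (Set Circle)} (hL : LamSys L) {c : Set (Set Circle)}
    (hcL : c ⊆ L) (hc : IsChain (· ⊆ ·) c) (hnd : IsND (⋃₀ c)) : ⋃₀ c ∈ L := by
  obtain ⟨T, hTc, hTsub, hTeq⟩ :=
    TopologicalSpace.isOpen_sUnion_countable c fun s hs => (hL.nd s (hcL hs)).isOpen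
  have hTne : T.Nonempty := nonempty_iff_ne_empty.mpr fun hT =>
    hnd.infinite.nonempty.ne_empty (by rw [← hTeq, hT, sUnion_empty])
  obtain ⟨a, rfl⟩ := hTc.exists_eq_range hTne
  have hsup : ∀ x ∈ c, ∀ y ∈ c, x ⊔ y ∈ c := fun x hx y hy => by
    rcases hc.total hx hy with h | h
    · rwa [sup_eq_right.mpr h]
    · rwa [sup_eq_left.mpr h]
  have hmem : ∀ n, partialSups a n ∈ c := fun n => by
    rw [partialSups_eq_sup'_range]
    exact Finset.sup'_mem c hsup _ _ _ fun i _ => hTsub ⟨i, rfl⟩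
  have hunion : ⋃ n, partialSups a n = ⋃₀ c := by
    rw [← hTeq, sUnion_range]
    exact iSup_partialSups_eq a
  rw [← hunion] at hnd ⊢
  exact hL.chainUnion _ (fun n => hcL (hmem n)) (fun n => partialSups_monotone a n.le_succ) hnd

lemma LamSys.subset_or_subset_dual {L : Set (Set Circle)} (hL : LamSys L) {U : Set Circle}
    (hU : IsPreconnected U) (hUE : Disjoint U (ELset L)) {I : Set Circle} (hI : I ∈ L) :
    U ⊆ I ∨ U ⊆ dual I :=
  hU.subset_or_subset_dual (hL.nd I hI).isOpen (hUE.mono_right (subset_biUnion_of_mem hI))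

def leavesDisjointFrom (L : Set (Set Circle)) (U : Set Circle) : Set (Set Circle) :=
  {K ∈ L | Disjoint K U}

lemma LamSys.exists_maximal_leavesDisjointFrom {L : Set (Set Circle)} (hL : LamSys L)
    {U : Set Circle} (hU : IsND U) {K : Set Circle} (hK : K ∈ leavesDisjointFrom L U) :
    ∃ M, K ⊆ M ∧ Maximal (· ∈ leavesDisjointFrom L U) M := by
  refine zorn_subset_nonempty _ (fun c hcS hc hcne => ?_) K hK
  have hcL : c ⊆ L := fun s hs => (hcS hs).1
  have hdisj : Disjoint (⋃₀ c) U := disjoint_sUnion_left.mpr fun s hs => (hcS hs).2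
  obtain ⟨x, hx⟩ := hU.infinite.nonempty
  obtain ⟨K₀, hK₀⟩ := hcne
  have hnd : IsND (⋃₀ c) := isND_of_isOpen_of_isPreconnected
    (isOpen_sUnion fun s hs => (hL.nd s (hcL hs)).isOpen)
    (IsPreconnected.sUnion_directed hc.directedOn fun s hs => (hL.nd s (hcL hs)).isPreconnected)
    ((hL.nd K₀ (hcL hK₀)).infinite.nonempty.mono (subset_sUnion_of_mem hK₀))
    (q := x) fun h => disjoint_left.mp (hdisj.closure_left hU.isOpen) h hx
  exact ⟨⋃₀ c, ⟨hL.sUnion_mem hcL hc hnd, hdisj⟩, fun s hs => subset_sUnion_of_mem hs⟩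

lemma LamSys.isGap_maximal_leavesDisjointFrom {L : Set (Set Circle)} (hL : LamSys L)
    {U : Set Circle} (hU : IsND U) (hUE : Disjoint U (ELset L)) :
    IsGap L {M | Maximal (· ∈ leavesDisjointFrom L U) M} := by
  have hUK : ∀ K ∈ leavesDisjointFrom L U, ¬U ⊆ K := fun K hK hsub =>
    hU.infinite.nonempty.ne_empty (disjoint_self.mp (hK.2.mono_left hsub))
  have hdualK : ∀ K ∈ leavesDisjointFrom L U, U ⊆ dual K := fun K hK =>
    (hL.subset_or_subset_dual hU.isPreconnected hUE hK.1).resolve_left (hUK K hK)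
  refine ⟨fun M hM => hM.1.1, fun K₁ hK₁ K₂ hK₂ hne => ?_, fun I hI => ?_⟩
  · rw [← disjoint_iff_inter_eq_empty]
    rcases hL.unlinked K₁ hK₁.1.1 K₂ hK₂.1.1 with (h | h) | (h | h)
    · exact absurd (hK₁.eq_of_subset hK₂.1 h) hne
    · exact absurd ((hdualK K₁ hK₁.1).trans h) (hUK K₂ hK₂.1)
    · exact (disjoint_dual K₂).symm.mono_left h
    · have h' : K₂ ⊆ K₁ := by
        simpa only [(hL.nd K₁ hK₁.1.1).dual_dual, (hL.nd K₂ hK₂.1.1).dual_dual] using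
          dual_subset_dual h
      exact absurd (hK₂.eq_of_subset hK₁.1 h').symm hne
  · rcases hL.subset_or_subset_dual hU.isPreconnected hUE hI with h | h
    · obtain ⟨M, hsub, hM⟩ := hL.exists_maximal_leavesDisjointFrom hU
        ⟨hL.dualMem I hI, (disjoint_dual I).symm.mono_right h⟩
      exact ⟨M, hM, Or.inr hsub⟩
    · obtain ⟨M, hsub, hM⟩ := hL.exists_maximal_leavesDisjointFrom hU
        ⟨hI, (disjoint_dual I).mono_right h⟩
      exact ⟨M, hM, Or.inl hsub⟩

lemma subset_vset_maximal_leavesDisjointFrom (L : Set (Set Circle)) (U : Set Circle) :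
    U ⊆ vset {M | Maximal (· ∈ leavesDisjointFrom L U) M} :=
  fun _ hp ⟨_, hM, hpM⟩ => disjoint_left.mp hM.1.2 hpM hp

end

/-- The endpoint set of a very full lamination system is dense in `S¹`. -/
theorem stmt12 (L : Set (Set Circle)) (hL : LamSys L) (hvf : VeryFull L) :
    Dense (ELset L) := by
  refine dense_iff_inter_open.mpr fun U₀ hU₀ hne => ?_
  by_contra hE
  obtain ⟨u, v, huv, hsub⟩ := exists_oInt_subset_of_isOpen hU₀ hne
  have hUE : Disjoint (oInt u v) (ELset L) :=
    (disjoint_iff_inter_eq_empty.mpr (not_nonempty_iff_eq_empty.mp hE)).mono_left hsub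
  have hG := hL.isGap_maximal_leavesDisjointFrom ⟨u, v, huv, rfl⟩ hUE
  exact oInt_infinite huv ((hvf _ hG).subset (subset_vset_maximal_leavesDisjointFrom L _))
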